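/- arXiv:0710.5109 — 3 statements merged into one kernel-verified Lean document; each statement's English description precedes it below -/
import Mathlib

section
/- Let a:(-∞,0]→[0,1] be a monotone non-decreasing function such that for some constants B>0 and δ>0 the inequality t·a(s) ≤ B·a(s+t)^{1+δ} holds for all s ≤ 0 and t ∈ [0,1] with s+t ≤ 0. Then for all S < 0 with a(S) > 0 and all D ∈ [0,1] with S+D ≤ 0, one has D ≤ e·(3+2/δ)·B·a(S+D)^δ. -/
/-!
Put `d = a (S + D)` and look at the levels `d / 2 ^ n`. Applied between a point `s` with
`a s ≥ d / 2 ^ (n + 1)` and a point `v > s` with `a v < d / 2 ^ n`, the hypothesis forces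
`v - s < 2 B (d / 2 ^ n) ^ δ`; so from any point of level `n + 1` one reaches a point of level `n`
(or `S + D` itself) within that distance. Since `a S > 0`, the point `S` lies on some level, and
summing these steps gives `D ≤ B d ^ δ (1 + 2 ∑ 2 ^ (-k δ))`; the geometric series is at most
`1 + 2 / δ` because `2 ^ δ ≥ 1 + δ log 2`.
-/

open Real Finset

lemma one_div_one_sub_half_rpow_le {δ : ℝ} (hδ : 0 < δ) :
    1 / (1 - (1 / 2 : ℝ) ^ δ) ≤ 1 + 2 / δ := by
  set x := (2 : ℝ) ^ δ
  have hx : 1 + δ / 2 ≤ x := calc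
    1 + δ / 2 ≤ log 2 * δ + 1 := by nlinarith [log_two_gt_d9]
    _ ≤ exp (log 2 * δ) := add_one_le_exp _
    _ = x := (rpow_def_of_pos two_pos δ).symm
  rw [div_rpow zero_le_one zero_le_two, one_rpow, one_sub_div (by positivity),
    one_div_div, div_le_iff₀ (by linarith)]
  field_simp
  nlinarith

lemma one_add_two_mul_geom_sum_half_rpow_le {δ : ℝ} (hδ : 0 < δ) (n : ℕ) :
    1 + 2 * ∑ k ∈ range n, ((1 / 2 : ℝ) ^ δ) ^ k ≤ exp 1 * (3 + 2 / δ) := by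
  have hq : (1 / 2 : ℝ) ^ δ < 1 := rpow_lt_one (by norm_num) (by norm_num) hδ
  have hsum : ∑ k ∈ range n, ((1 / 2 : ℝ) ^ δ) ^ k ≤ 1 + 2 / δ := by
    have := geom_sum_Ico_le_of_lt_one (m := 0) (n := n) (rpow_nonneg one_half_pos.le δ) hq
    rw [pow_zero, ← range_eq_Ico] at this
    exact this.trans (one_div_one_sub_half_rpow_le hδ)
  have he : 2 ≤ exp 1 := by linarith [exp_one_gt_d9]
  nlinarith [div_pos two_pos hδ]

section

variable {a : ℝ → ℝ} {B δ : ℝ}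
  (hiter : ∀ s ≤ (0:ℝ), ∀ t ∈ Set.Icc (0:ℝ) 1, s + t ≤ 0 →
    t * a s ≤ B * a (s + t) ^ (1 + δ))
include hiter

lemma sub_mul_le_of_iter {s v : ℝ} (hsv : s ≤ v) (hv : v ≤ 0) (hvs : v - s ≤ 1) :
    (v - s) * a s ≤ B * a v ^ (1 + δ) := by
  simpa using hiter s (by linarith) (v - s) ⟨by linarith, hvs⟩ (by linarith)

lemma sub_le_of_iter_of_le {s p : ℝ} (hsp : s ≤ p) (hp : p ≤ 0) (hps : p - s ≤ 1)
    (hap : 0 < a p) (has : a p ≤ a s) : p - s ≤ B * a p ^ δ := by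
  have h := (mul_le_mul_of_nonneg_left has (sub_nonneg.2 hsp)).trans
    (sub_mul_le_of_iter hiter hsp hp hps)
  rw [rpow_add hap, rpow_one, ← mul_assoc, mul_comm B] at h
  exact le_of_mul_le_mul_right (h.trans_eq (by ring)) hap

lemma sub_lt_of_iter_of_lt (hB : 0 < B) (hδ : -1 < δ) {s v c : ℝ} (hsv : s ≤ v) (hv : v ≤ 0)
    (hvs : v - s ≤ 1) (hav₀ : 0 ≤ a v) (hav : a v < c) (has : c / 2 ≤ a s) :
    v - s < 2 * B * c ^ δ := by
  have hc : 0 < c := hav₀.trans_lt hav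
  rcases hsv.eq_or_lt with rfl | hsv
  · simpa using by positivity
  have h : (v - s) * (c / 2) < B * (c * c ^ δ) := calc
    (v - s) * (c / 2) ≤ (v - s) * a s := mul_le_mul_of_nonneg_left has (by linarith)
    _ ≤ B * a v ^ (1 + δ) := sub_mul_le_of_iter hiter hsv.le hv hvs
    _ < B * c ^ (1 + δ) := by gcongr; linarith
    _ = B * (c * c ^ δ) := by rw [rpow_add hc, rpow_one]
  nlinarith

lemma sub_le_of_half_pow_le (hB : 0 < B) (hδ : -1 < δ) (ha₀ : ∀ s ≤ (0:ℝ), 0 ≤ a s)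
    {p : ℝ} (hp : p ≤ 0) (hap : 0 < a p) (n : ℕ) {s : ℝ} (hs : p - 1 ≤ s) (hsp : s ≤ p)
    (has : a p * (1 / 2) ^ n ≤ a s) :
    p - s ≤ B * a p ^ δ * (1 + 2 * ∑ k ∈ range n, ((1 / 2 : ℝ) ^ δ) ^ k) := by
  induction n generalizing s with
  | zero =>
    simpa using sub_le_of_iter_of_le hiter hsp hp (by linarith) hap (by simpa using has)
  | succ n ih =>
    set R := B * a p ^ δ * (1 + 2 * ∑ k ∈ range n, ((1 / 2 : ℝ) ^ δ) ^ k)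
    set c := a p * (1 / 2) ^ n
    have hcδ : c ^ δ = a p ^ δ * ((1 / 2 : ℝ) ^ δ) ^ n := by
      rw [mul_rpow hap.le (by positivity), rpow_pow_comm (by norm_num)]
    -- Either `a v ≥ c` and the induction hypothesis applies at `v`, or `a` stays below `c`
    -- up to `v` and the one-step bound forces `v = p`.
    set v := min (s + 2 * B * c ^ δ) p with hv
    have hsv : s ≤ v := le_min (by simp only [le_add_iff_nonneg_right]; positivity) hsp
    have hvp : v ≤ p := min_le_right _ _
    have hsplit : p - s ≤ 2 * B * c ^ δ + R := by
      by_cases hav : c ≤ a v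
      · have := ih (by linarith) hvp hav
        have := min_le_left (s + 2 * B * c ^ δ) p
        linarith
      · have hlt := sub_lt_of_iter_of_lt hiter hB hδ hsv (hvp.trans hp) (by linarith)
          (ha₀ v (hvp.trans hp)) (not_le.1 hav) (by rw [pow_succ] at has; linarith)
        have hvp : v = p := (min_choice _ _).resolve_left fun h => by linarith [hv.trans h]
        have : 0 ≤ R := by positivity
        linarith
    rw [sum_range_succ]
    rw [hcδ] at hsplit
    linarith

end

theorem kolodziej_iteration_general (a : ℝ → ℝ) (B δ : ℝ) (hB : 0 < B) (hδ : 0 < δ)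
    (hrange : ∀ s ≤ (0:ℝ), a s ∈ Set.Icc (0:ℝ) 1)
    (hmono : ∀ s t : ℝ, s ≤ t → t ≤ 0 → a s ≤ a t)
    (hiter : ∀ s ≤ (0:ℝ), ∀ t ∈ Set.Icc (0:ℝ) 1, s + t ≤ 0 →
      t * a s ≤ B * a (s + t) ^ (1 + δ))
    (S : ℝ) (haS : 0 < a S)
    (D : ℝ) (hD : D ∈ Set.Icc (0:ℝ) 1) (hSD : S + D ≤ 0) :
    D ≤ Real.exp 1 * (3 + 2 / δ) * B * a (S + D) ^ δ := by
  obtain ⟨hD₀, hD₁⟩ := hD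
  have hd : 0 < a (S + D) := haS.trans_le (hmono S (S + D) (by linarith) hSD)
  obtain ⟨n, hn⟩ := exists_pow_lt_of_lt_one haS one_half_lt_one
  have hlevel : a (S + D) * (1 / 2) ^ n ≤ a S :=
    (mul_le_of_le_one_left (by positivity) (hrange _ hSD).2).trans hn.le
  calc D = S + D - S := by ring
    _ ≤ B * a (S + D) ^ δ * (1 + 2 * ∑ k ∈ range n, ((1 / 2 : ℝ) ^ δ) ^ k) :=
      sub_le_of_half_pow_le hiter hB (by linarith) (fun s hs => (hrange s hs).1) hSD hd n
        (by linarith) (by linarith) hlevel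
    _ ≤ B * a (S + D) ^ δ * (exp 1 * (3 + 2 / δ)) := by
      gcongr
      exact one_add_two_mul_geom_sum_half_rpow_le hδ n
    _ = exp 1 * (3 + 2 / δ) * B * a (S + D) ^ δ := by ring

/-- Kolodziej's iteration lemma. -/
theorem kolodziej_iteration (a : ℝ → ℝ) (B δ : ℝ) (hB : 0 < B) (hδ : 0 < δ)
    (hrange : ∀ s ≤ (0:ℝ), a s ∈ Set.Icc (0:ℝ) 1)
    (hmono : ∀ s t : ℝ, s ≤ t → t ≤ 0 → a s ≤ a t)
    (hiter : ∀ s ≤ (0:ℝ), ∀ t ∈ Set.Icc (0:ℝ) 1, s + t ≤ 0 →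
      t * a s ≤ B * a (s + t) ^ (1 + δ))
    (S : ℝ) (hS : S < 0) (haS : 0 < a S)
    (D : ℝ) (hD : D ∈ Set.Icc (0:ℝ) 1) (hSD : S + D ≤ 0) :
    D ≤ Real.exp 1 * (3 + 2 / δ) * B * a (S + D) ^ δ :=
  kolodziej_iteration_general a B δ hB hδ hrange hmono hiter S haS D hD hSD
end

section
/- Let (X,μ) be a finite measure space, β ≥ 1, and f a measurable function with 0 < ‖f‖_{L^1} < ∞. Then ‖f‖_{L log^β L(X)} ≤ ∫_X |f| · log^β(e + |f|/‖f‖_{L^1(X)}) dμ, where ‖·‖_{L log^β L} is the Luxemburg norm associated to P_β(t) = t·log^β(e+t). -/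
/-!
Let `M = ‖f‖_{L¹}` and `L = ∫ |f| log^β (e + |f| / M)`. Since `log (e + t) ≥ 1`, we have `M ≤ L`,
hence `|f| / L ≤ |f| / M` and, the logarithmic factor being monotone,
`∫ P_β (|f| / L) ≤ (1 / L) ∫ |f| log^β (e + |f| / M) = 1`.
So `L` is admissible in the Luxemburg infimum. When the right-hand side is infinite there is
nothing to prove.
-/

open MeasureTheory Real

lemma one_le_log_exp_one_add {t : ℝ} (ht : 0 ≤ t) : 1 ≤ log (exp 1 + t) :=
  calc (1 : ℝ) = log (exp 1) := (log_exp 1).symm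
    _ ≤ log (exp 1 + t) := log_le_log (exp_pos 1) (le_add_of_nonneg_right ht)

lemma log_exp_one_add_rpow_le {β s t : ℝ} (hβ : 0 ≤ β) (hs : 0 ≤ s) (hst : s ≤ t) :
    log (exp 1 + s) ^ β ≤ log (exp 1 + t) ^ β :=
  rpow_le_rpow (zero_le_one.trans (one_le_log_exp_one_add hs))
    (log_le_log (by positivity) (by linarith)) hβ

lemma le_mul_log_exp_one_add_rpow {β s t : ℝ} (hβ : 0 ≤ β) (hs : 0 ≤ s) (ht : 0 ≤ t) :
    s ≤ s * log (exp 1 + t) ^ β :=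
  le_mul_of_one_le_right hs (one_le_rpow (one_le_log_exp_one_add ht) hβ)

lemma div_mul_log_exp_one_add_div_rpow_le {β s M L : ℝ} (hβ : 0 ≤ β) (hs : 0 ≤ s)
    (hM : 0 < M) (hML : M ≤ L) :
    s / L * log (exp 1 + s / L) ^ β ≤ s * log (exp 1 + s / M) ^ β / L := by
  have hL : 0 < L := hM.trans_le hML
  rw [div_mul_eq_mul_div]
  gcongr s * ?_ / L
  exact log_exp_one_add_rpow_le hβ (by positivity) (div_le_div_of_nonneg_left hs hM hML)

lemma continuous_abs_mul_log_exp_one_add_abs_div_rpow {β M : ℝ} (hβ : 0 ≤ β) (hM : 0 ≤ M) :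
    Continuous fun t : ℝ => |t| * log (exp 1 + |t| / M) ^ β := by
  have hne : ∀ t : ℝ, exp 1 + |t| / M ≠ 0 := fun t =>
    (add_pos_of_pos_of_nonneg (exp_pos 1) (div_nonneg (abs_nonneg t) hM)).ne'
  exact continuous_abs.mul <|
    ((continuous_const.add (continuous_abs.div_const M)).log hne).rpow_const fun _ => Or.inr hβ

/-- `‖f‖_{L log^β L} = sInf (llogLAdmissible μ β f)`. -/
def llogLAdmissible {X : Type*} [MeasurableSpace X] (μ : Measure X) (β : ℝ) (f : X → ℝ) :
    Set ℝ :=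
  {l : ℝ | 0 < l ∧ ∫ x, (|f x| / l) * log (exp 1 + |f x| / l) ^ β ∂μ ≤ 1}

section

variable {X : Type*} [MeasurableSpace X] {μ : Measure X} {β M : ℝ} {f : X → ℝ}

lemma aestronglyMeasurable_abs_mul_log_exp_one_add_div_rpow (hβ : 0 ≤ β) (hM : 0 ≤ M)
    (hf : AEStronglyMeasurable (fun x => |f x|) μ) :
    AEStronglyMeasurable (fun x => |f x| * log (exp 1 + |f x| / M) ^ β) μ := by
  simpa only [Function.comp_def, abs_abs] using
    (continuous_abs_mul_log_exp_one_add_abs_div_rpow hβ hM).comp_aestronglyMeasurable hf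

lemma integral_mul_log_exp_one_add_div_rpow_mem_llogLAdmissible (hβ : 0 ≤ β) (hM : 0 < M)
    (hMf : M ≤ ∫ x, |f x| ∂μ) (hf : Integrable (fun x => |f x|) μ)
    (hg : Integrable (fun x => |f x| * log (exp 1 + |f x| / M) ^ β) μ) :
    ∫ x, |f x| * log (exp 1 + |f x| / M) ^ β ∂μ ∈ llogLAdmissible μ β f := by
  set L := ∫ x, |f x| * log (exp 1 + |f x| / M) ^ β ∂μ
  have hML : M ≤ L := hMf.trans <| integral_mono hf hg fun x =>
    le_mul_log_exp_one_add_rpow hβ (abs_nonneg _) (by positivity)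
  have hL : 0 < L := hM.trans_le hML
  refine ⟨hL, ?_⟩
  calc ∫ x, |f x| / L * log (exp 1 + |f x| / L) ^ β ∂μ
      ≤ ∫ x, |f x| * log (exp 1 + |f x| / M) ^ β / L ∂μ :=
        integral_mono_of_nonneg (ae_of_all _ fun x => by
            have := one_le_log_exp_one_add (t := |f x| / L) (by positivity)
            positivity)
          (hg.div_const L)
          (ae_of_all _ fun x => div_mul_log_exp_one_add_div_rpow_le hβ (abs_nonneg _) hM hML)
    _ = 1 := by rw [integral_div, div_self hL.ne']

end

theorem LlogL_norm_le_general {X : Type*} [MeasurableSpace X]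
    (μ : Measure X) (β : ℝ) (hβ : 1 ≤ β)
    (f : X → ℝ) (hpos : 0 < ∫ x, |f x| ∂μ) :
    ENNReal.ofReal (sInf {l : ℝ | 0 < l ∧
        ∫ x, (|f x| / l) * Real.log (Real.exp 1 + |f x| / l) ^ β ∂μ ≤ 1})
      ≤ ∫⁻ x, ENNReal.ofReal
          (|f x| * Real.log (Real.exp 1 + |f x| / ∫ y, |f y| ∂μ) ^ β) ∂μ := by
  have hβ0 : 0 ≤ β := zero_le_one.trans hβ
  have hf : Integrable (fun x => |f x|) μ := .of_integral_ne_zero hpos.ne'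
  have hg_nonneg : 0 ≤ᵐ[μ] fun x => |f x| * Real.log (Real.exp 1 + |f x| / ∫ y, |f y| ∂μ) ^ β :=
    ae_of_all _ fun x => (abs_nonneg _).trans
      (le_mul_log_exp_one_add_rpow hβ0 (abs_nonneg _) (by positivity))
  by_cases hg : Integrable
      (fun x => |f x| * Real.log (Real.exp 1 + |f x| / ∫ y, |f y| ∂μ) ^ β) μ
  · rw [← ofReal_integral_eq_lintegral_ofReal hg hg_nonneg]
    exact ENNReal.ofReal_le_ofReal <| csInf_le ⟨0, fun l hl => hl.1.le⟩ <|
      integral_mul_log_exp_one_add_div_rpow_mem_llogLAdmissible hβ0 hpos le_rfl hf hg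
  · rw [← lintegral_ofReal_ne_top_iff_integrable
      (aestronglyMeasurable_abs_mul_log_exp_one_add_div_rpow hβ0 hpos.le hf.1) hg_nonneg,
      not_not] at hg
    exact hg ▸ le_top

/-- Estimate of the `L log^β L` Luxemburg norm:
`‖f‖_{L log^β L} ≤ ∫ |f| log^β (e + |f|/‖f‖_{L^1})`. -/
theorem LlogL_norm_le {X : Type*} [MeasurableSpace X]
    (μ : Measure X) [IsFiniteMeasure μ] (β : ℝ) (hβ : 1 ≤ β)
    (f : X → ℝ) (hf : Measurable f) (hf1 : Integrable f μ)
    (hpos : 0 < ∫ x, |f x| ∂μ) :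
    ENNReal.ofReal (sInf {l : ℝ | 0 < l ∧
        ∫ x, (|f x| / l) * Real.log (Real.exp 1 + |f x| / l) ^ β ∂μ ≤ 1})
      ≤ ∫⁻ x, ENNReal.ofReal
          (|f x| * Real.log (Real.exp 1 + |f x| / ∫ y, |f y| ∂μ) ^ β) ∂μ :=
  LlogL_norm_le_general μ β hβ f hpos
end

section
/- Let (X,μ) be a finite measure space and φ, ψ bounded measurable functions with a := max(‖φ‖_∞, ‖ψ‖_∞). If 0 < ‖φ−ψ‖_{L^1(X)} ≤ 1/2, then ‖φ−ψ‖_{Exp L(X)} ≤ C_a / log(1/‖φ−ψ‖_{L^1(X)}), where C_a > 0 is a constant depending only on a and μ(X), and ‖u‖_{Exp L(X)} := inf{k>0 : ∫_X (e^{|u|/k}−1) dμ ≤ 1}. -/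
/-!
Write `u = φ - ψ`, `L = ‖u‖₁`, `T = log (1/L)` and `b = 2a ≥ |u|`. Since `eᵗ - 1 ≤ t eᵗ`,
for every `k > 0` we get `∫ (e^{|u|/k} - 1) ≤ e^{b/k} L / k`. For `k = (2b+1)/T` this is
`(T/(2b+1)) e^{bT/(2b+1) - T} ≤ T e^{-T/2} ≤ 2/e < 1`, so `k` is admissible in the
Luxemburg infimum.
-/

open MeasureTheory Real

noncomputable def expLNorm {X : Type*} [MeasurableSpace X] (μ : Measure X) (u : X → ℝ) : ℝ :=
  sInf {k : ℝ | 0 < k ∧ ∫ x, (exp (|u x| / k) - 1) ∂μ ≤ 1}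

theorem Real.exp_sub_one_le_mul_exp (t : ℝ) : exp t - 1 ≤ t * exp t := by
  have h := mul_le_mul_of_nonneg_left (one_sub_le_exp_neg t) (exp_pos t).le
  rw [← exp_add, add_neg_cancel, exp_zero] at h
  linarith

theorem exp_div_div_mul_exp_neg_le_one {b T : ℝ} (hb : 0 ≤ b) (hT : 0 < T) :
    exp (b / ((2 * b + 1) / T)) / ((2 * b + 1) / T) * exp (-T) ≤ 1 := by
  set C := 2 * b + 1
  have hC : 1 ≤ C := by linarith
  have hexp : b / (C / T) - T ≤ -(T / 2) := by
    have : b / (C / T) ≤ T / 2 := by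
      rw [div_div_eq_mul_div, div_le_iff₀ (by linarith)]
      nlinarith
    linarith
  have hTe : T * exp (-(T / 2)) ≤ 1 := by
    have := mul_exp_neg_le_exp_neg_one (T / 2)
    linarith [exp_neg_one_lt_half]
  calc exp (b / (C / T)) / (C / T) * exp (-T)
      = T * exp (b / (C / T) - T) / C := by
        rw [exp_sub, exp_neg]; field_simp
    _ ≤ T * exp (-(T / 2)) / C := by gcongr
    _ ≤ 1 := by rw [div_le_one (by linarith)]; linarith

section

variable {X : Type*} [MeasurableSpace X] {μ : Measure X}

theorem expLNorm_le {u : X → ℝ} {k : ℝ} (hk : 0 < k)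
    (h : ∫ x, (exp (|u x| / k) - 1) ∂μ ≤ 1) : expLNorm μ u ≤ k :=
  csInf_le ⟨0, fun _ hk => hk.1.le⟩ ⟨hk, h⟩

theorem integral_exp_div_sub_one_le {u : X → ℝ} {b k : ℝ} (hu : Integrable u μ)
    (hu0 : ∀ᵐ x ∂μ, 0 ≤ u x) (hub : ∀ᵐ x ∂μ, u x ≤ b) (hk : 0 < k) :
    ∫ x, (exp (u x / k) - 1) ∂μ ≤ exp (b / k) / k * ∫ x, u x ∂μ := by
  rw [← integral_const_mul]
  refine integral_mono_of_nonneg ?_ (hu.const_mul _) ?_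
  · filter_upwards [hu0] with x hx
    simpa using one_le_exp (div_nonneg hx hk.le)
  · filter_upwards [hu0, hub] with x hx hxb
    calc exp (u x / k) - 1 ≤ u x / k * exp (u x / k) := exp_sub_one_le_mul_exp _
      _ ≤ u x / k * exp (b / k) := by gcongr
      _ = exp (b / k) / k * u x := by ring

theorem expLNorm_le_div_log_inv {u : X → ℝ} {b : ℝ} (hb : 0 ≤ b)
    (hub : ∀ᵐ x ∂μ, |u x| ≤ b) (hL0 : 0 < ∫ x, |u x| ∂μ) (hL1 : ∫ x, |u x| ∂μ < 1) :
    expLNorm μ u ≤ (2 * b + 1) / log (1 / ∫ x, |u x| ∂μ) := by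
  set L := ∫ x, |u x| ∂μ
  have hT : 0 < log (1 / L) := log_pos (by rwa [lt_div_iff₀ hL0, one_mul])
  have hL : L = exp (-log (1 / L)) := by
    rw [one_div, log_inv, neg_neg, exp_log hL0]
  refine expLNorm_le (by positivity) ((integral_exp_div_sub_one_le
    (Integrable.of_integral_ne_zero hL0.ne') (ae_of_all _ fun _ => abs_nonneg _) hub
    (by positivity)).trans ?_)
  have := exp_div_div_mul_exp_neg_le_one hb hT
  rwa [← hL] at this

end

theorem expL_norm_le_of_L1_small_general {X : Type*} [MeasurableSpace X]
    (μ : Measure X) (a : ℝ) (ha : 0 < a) :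
    ∃ C > (0:ℝ), ∀ φ ψ : X → ℝ, Measurable φ → Measurable ψ →
      (∀ x, |φ x| ≤ a) → (∀ x, |ψ x| ≤ a) →
      0 < ∫ x, |φ x - ψ x| ∂μ → (∫ x, |φ x - ψ x| ∂μ) ≤ 1 / 2 →
      sInf {k : ℝ | 0 < k ∧ ∫ x, (Real.exp (|φ x - ψ x| / k) - 1) ∂μ ≤ 1}
        ≤ C / Real.log (1 / ∫ x, |φ x - ψ x| ∂μ) := by
  refine ⟨2 * (2 * a) + 1, by positivity, fun φ ψ _ _ hφ hψ hL0 hL2 => ?_⟩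
  have hb : ∀ x, |φ x - ψ x| ≤ 2 * a := fun x =>
    (abs_sub _ _).trans (by linarith [hφ x, hψ x])
  exact expLNorm_le_div_log_inv (u := φ - ψ) (by positivity) (ae_of_all _ hb) hL0
    (by simp only [Pi.sub_apply]; linarith)

/-- Control of the `Exp L` Luxemburg norm of a difference of bounded functions by
the logarithm of the reciprocal of its `L^1` norm: there is a constant `C_a > 0`
(depending only on `a` and the measure) such that whenever `|φ| ≤ a`, `|ψ| ≤ a` and
`0 < ‖φ - ψ‖_{L^1} ≤ 1/2`, one has
`‖φ - ψ‖_{Exp L} ≤ C_a / log (1/‖φ - ψ‖_{L^1})`. -/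
theorem expL_norm_le_of_L1_small {X : Type*} [MeasurableSpace X]
    (μ : Measure X) [IsFiniteMeasure μ] (a : ℝ) (ha : 0 < a) :
    ∃ C > (0:ℝ), ∀ φ ψ : X → ℝ, Measurable φ → Measurable ψ →
      (∀ x, |φ x| ≤ a) → (∀ x, |ψ x| ≤ a) →
      0 < ∫ x, |φ x - ψ x| ∂μ → (∫ x, |φ x - ψ x| ∂μ) ≤ 1 / 2 →
      sInf {k : ℝ | 0 < k ∧ ∫ x, (Real.exp (|φ x - ψ x| / k) - 1) ∂μ ≤ 1}
        ≤ C / Real.log (1 / ∫ x, |φ x - ψ x| ∂μ) :=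
  expL_norm_le_of_L1_small_general μ a ha
end
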